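/- Fix ω₀ > 0 and complex numbers L_a, G_b with |G_b| = 1, G_a = 1. For ρ ∈ [0,1] let L(ρ) = L_a·((1−ρ) + ρ·G_b) and assume 1 + L(ρ) ≠ 0 for all ρ ∈ [0,1]. Define k₀(ρ) = |(1−ρ)·L_a/(1+L(ρ))|. Then the derivative of k₀ at ρ = 1 equals −|L_a/(1+L(1))|; in particular this derivative does not depend on the phase of G_b. -/

import Mathlib

open Complex

/-
For `ρ ≤ 1` the cost factors as `k₀(ρ) = (1-ρ)·‖L_a/(1+L(ρ))‖`: a linear factor vanishing at
`ρ = 1` times a function continuous there. The slope of such a product at `1` is minus the value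
of the continuous factor, `-‖L_a/(1+L_a G_b)‖`; only continuity of that factor at `1` is needed.
-/

theorem hasDerivWithinAt_sub_smul_of_continuousWithinAt {𝕜 E : Type*}
    [NontriviallyNormedField 𝕜] [NormedAddCommGroup E] [NormedSpace 𝕜 E]
    {φ : 𝕜 → E} {s : Set 𝕜} {x : 𝕜} (hφ : ContinuousWithinAt φ s x) :
    HasDerivWithinAt (fun y => (y - x) • φ y) (φ x) s x := by
  rw [hasDerivWithinAt_iff_tendsto_slope]
  refine (hφ.mono Set.sdiff_subset).tendsto.congr' ?_
  filter_upwards [self_mem_nhdsWithin] with y hy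
  have hyx : y - x ≠ 0 := sub_ne_zero.mpr hy.2
  simp [slope_def_module, smul_smul, hyx]

theorem Complex.norm_one_sub_ofReal {ρ : ℝ} (hρ : ρ ≤ 1) : ‖1 - (ρ : ℂ)‖ = 1 - ρ := by
  rw [← ofReal_one, ← ofReal_sub, norm_real, Real.norm_of_nonneg (sub_nonneg.mpr hρ)]

theorem stmt_4_general (La Gb : ℂ)
    (hne : ∀ ρ : ℝ, ρ ∈ Set.Icc (0 : ℝ) 1 → 1 + La * ((1 - (ρ : ℂ)) + (ρ : ℂ) * Gb) ≠ 0) :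
    HasDerivWithinAt
      (fun ρ : ℝ => ‖(1 - (ρ : ℂ)) * La / (1 + La * ((1 - (ρ : ℂ)) + (ρ : ℂ) * Gb))‖)
      (-‖La / (1 + La * Gb)‖) (Set.Iic (1 : ℝ)) 1 := by
  have hL1 : 1 + La * Gb ≠ 0 := by simpa using hne 1 ⟨zero_le_one, le_rfl⟩
  have hcont : ContinuousAt
      (fun ρ : ℝ => -‖La / (1 + La * ((1 - (ρ : ℂ)) + (ρ : ℂ) * Gb))‖) 1 := by
    fun_prop (disch := simpa using hL1)
  have hderiv := hasDerivWithinAt_sub_smul_of_continuousWithinAt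
    (hcont.continuousWithinAt (s := Set.Iic 1))
  simp only [ofReal_one, sub_self, one_mul, zero_add, smul_eq_mul] at hderiv
  refine hderiv.congr_of_mem (fun ρ (hρ : ρ ≤ 1) => ?_) Set.self_mem_Iic
  rw [mul_div_assoc, norm_mul, norm_one_sub_ofReal hρ]
  ring

/-- Common slope at ρ = 1: the one-sided derivative of the cost
`k₀(ρ) = |(1-ρ)·L_a/(1+L(ρ))|` (for ρ ∈ [0,1]) at ρ = 1 equals `-|L_a/(1+L(1))|`, independently
of the phase of `G_b`. Here `L(ρ) = L_a·((1-ρ)+ρ·G_b)`, so `L(1) = L_a·G_b`. -/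
theorem stmt_4 (ω₀ : ℝ) (hω₀ : 0 < ω₀) (La Gb : ℂ) (hGb : ‖Gb‖ = 1)
    (hne : ∀ ρ : ℝ, ρ ∈ Set.Icc (0 : ℝ) 1 → 1 + La * ((1 - (ρ : ℂ)) + (ρ : ℂ) * Gb) ≠ 0) :
    HasDerivWithinAt
      (fun ρ : ℝ => ‖(1 - (ρ : ℂ)) * La / (1 + La * ((1 - (ρ : ℂ)) + (ρ : ℂ) * Gb))‖)
      (-‖La / (1 + La * Gb)‖) (Set.Iic (1 : ℝ)) 1 :=
  stmt_4_general La Gb hne
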